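/- (TOD/RR protocol constants satisfy the UGES protocol bounds for the Euclidean-norm Lyapunov function) Let l ≥ 2 be an integer, let e ∈ ℝ^{n₁} × ... × ℝ^{n_l} be partitioned into l blocks, and define h(e) to be e with its block of largest Euclidean norm set to zero (choosing the smallest index in case of ties). Then with W(e) := ‖e‖ (Euclidean norm of the full vector), we have W(h(e)) ≤ √((l−1)/l) · W(e) for all e. -/

import Mathlib

/-!
Zeroing the block of largest norm removes at least the average share `‖e‖² / l` of the squared
norm, since `‖e‖² = ∑ⱼ ‖eⱼ‖² ≤ l · maxⱼ ‖eⱼ‖²`. Hence `‖h(e)‖² ≤ (1 - 1/l) ‖e‖²`.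
-/

open Finset Function

theorem Fintype.sum_update_zero_eq_sub {ι : Type*} [Fintype ι] [DecidableEq ι] (f : ι → ℝ)
    (i : ι) : ∑ j, update f i 0 j = ∑ j, f j - f i := by
  rw [sum_update_of_mem (mem_univ i), zero_add, sdiff_singleton_eq_erase,
    sum_erase_eq_sub (mem_univ i)]

theorem Fintype.sum_sub_max_le {ι : Type*} [Fintype ι] (f : ι → ℝ) (i : ι)
    (hmax : ∀ j, f j ≤ f i) :
    ∑ j, f j - f i ≤ ((Fintype.card ι : ℝ) - 1) / Fintype.card ι * ∑ j, f j := by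
  have hcard : (0 : ℝ) < Fintype.card ι := Nat.cast_pos.mpr (Fintype.card_pos_iff.mpr ⟨i⟩)
  have hsum_le : ∑ j, f j ≤ Fintype.card ι * f i := by
    simpa using sum_le_sum fun j (_ : j ∈ univ) => hmax j
  have havg_le : (∑ j, f j) / Fintype.card ι ≤ f i := by
    rwa [div_le_iff₀ hcard, mul_comm]
  calc ∑ j, f j - f i ≤ ∑ j, f j - (∑ j, f j) / Fintype.card ι := by linarith
    _ = ((Fintype.card ι : ℝ) - 1) / Fintype.card ι * ∑ j, f j := by field_simp

theorem sqrt_sum_sq_norm_update_max_le {ι : Type*} [Fintype ι] [DecidableEq ι]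
    {E : ι → Type*} [∀ j, NormedAddCommGroup (E j)] (e : ∀ j, E j) (i : ι)
    (hmax : ∀ j, ‖e j‖ ≤ ‖e i‖) :
    √(∑ j, ‖update e i 0 j‖ ^ 2)
      ≤ √(((Fintype.card ι : ℝ) - 1) / Fintype.card ι) * √(∑ j, ‖e j‖ ^ 2) := by
  have hcoeff : (0 : ℝ) ≤ ((Fintype.card ι : ℝ) - 1) / Fintype.card ι := by
    have : (1 : ℝ) ≤ Fintype.card ι := Nat.one_le_cast.mpr (Fintype.card_pos_iff.mpr ⟨i⟩)
    exact div_nonneg (sub_nonneg.mpr this) (Nat.cast_nonneg _)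
  have hupdate : ∀ j, ‖update e i 0 j‖ ^ 2 = update (fun k => ‖e k‖ ^ 2) i 0 j := fun j => by
    rw [apply_update (fun k (x : E k) => ‖x‖ ^ 2) e i 0 j, norm_zero, zero_pow two_ne_zero]
  rw [← Real.sqrt_mul hcoeff]
  refine Real.sqrt_le_sqrt ?_
  simp_rw [hupdate, Fintype.sum_update_zero_eq_sub]
  exact Fintype.sum_sub_max_le _ i fun j => pow_le_pow_left₀ (norm_nonneg _) (hmax j) 2

theorem tod_protocol_contraction_general (l : ℕ) (n : Fin l → ℕ)
    (e : ∀ j : Fin l, EuclideanSpace ℝ (Fin (n j)))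
    (j₀ : Fin l) (hmax : ∀ j, ‖e j‖ ≤ ‖e j₀‖) :
    Real.sqrt (∑ j, ‖Function.update e j₀ 0 j‖ ^ 2)
      ≤ Real.sqrt (((l : ℝ) - 1) / l) * Real.sqrt (∑ j, ‖e j‖ ^ 2) := by
  simpa using sqrt_sum_sq_norm_update_max_le e j₀ hmax

theorem tod_protocol_contraction (l : ℕ) (hl : 2 ≤ l) (n : Fin l → ℕ)
    (e : ∀ j : Fin l, EuclideanSpace ℝ (Fin (n j)))
    (j₀ : Fin l) (hmax : ∀ j, ‖e j‖ ≤ ‖e j₀‖) :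
    Real.sqrt (∑ j, ‖Function.update e j₀ 0 j‖ ^ 2)
      ≤ Real.sqrt (((l : ℝ) - 1) / l) * Real.sqrt (∑ j, ‖e j‖ ^ 2) :=
  tod_protocol_contraction_general l n e j₀ hmax
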